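/- arXiv:1907.01157 — 2 statements merged into one kernel-verified Lean document; each statement's English description precedes it below -/
import Mathlib

section
/- For 0 ≤ i ≤ d, the following four equalities of subspaces hold: U_i = exp_q((a⁻¹/(q − q⁻¹))ψ)(W_i), U_i^↓ = exp_q((a/(q − q⁻¹))ψ)(W_i), W_i = exp_{q⁻¹}(−(a⁻¹/(q − q⁻¹))ψ)(U_i), and W_i = exp_{q⁻¹}(−(a/(q − q⁻¹))ψ)(U_i^↓), where each right-hand side denotes the image of the subspace under the indicated map. -/
noncomputable def qNum {𝕂 : Type*} [Field 𝕂] (q : 𝕂) (n : ℕ) : 𝕂 :=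
  (q ^ n - q⁻¹ ^ n) / (q - q⁻¹)

noncomputable def qFact {𝕂 : Type*} [Field 𝕂] (q : 𝕂) (n : ℕ) : 𝕂 :=
  ∏ j ∈ Finset.range n, qNum q (j + 1)

noncomputable def qExp {𝕂 : Type*} [Field 𝕂] {V : Type*} [AddCommGroup V] [Module 𝕂 V]
    (q : 𝕂) (N : ℕ) (T : Module.End 𝕂 V) : Module.End 𝕂 V :=
  ∑ n ∈ Finset.range N, (q ^ (n * (n - 1) / 2) / qFact q n) • T ^ n

noncomputable def qExpInv {𝕂 : Type*} [Field 𝕂] {V : Type*} [AddCommGroup V] [Module 𝕂 V]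
    (q : 𝕂) (N : ℕ) (T : Module.End 𝕂 V) : Module.End 𝕂 V :=
  ∑ n ∈ Finset.range N, (q⁻¹ ^ (n * (n - 1) / 2) / qFact q n) • T ^ n

/-!
Write `E_x = exp_q(xψ)`, `F_x = exp_{q⁻¹}(-xψ)` and `R_x = (1 - (q - q⁻¹)qxψ)⁻¹`; as `ψ` is
nilpotent, all three are invertible. Comparing coefficients of powers of `ψ` gives the
`q`-difference equations `R_x⁻¹ E_{q²x} = E_x` and `R_x⁻¹ F_x = F_{q²x}`, while `Kψ = q²ψK` gives
`K E_x = E_{q²x} K` and `K F_x = F_{q²x} K`. Hence `K E_x = E_x (R_x K)` and `(R_x K) F_x = F_x K`.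
For `x = a⁻¹/(q - q⁻¹)` one has `R_x K = 𝓜`, and for `x = a/(q - q⁻¹)` one has `R_x B = 𝓜`,
where `B` also satisfies `Bψ = q²ψB`. So these `q`-exponentials intertwine `𝓜` with `K` or `B`
and carry eigenspaces onto eigenspaces. Finally `U_i` and `U_i^↓` are exactly the
`q^{d-2i}`-eigenspaces of `K` and `B`, since these act by distinct scalars on the summands of a
direct sum.
-/

open Finset Module.End

section QFactorial

variable {𝕂 : Type*} [Field 𝕂] {q : 𝕂}

lemma qNum_ne_zero (hq : q ≠ 0) {n : ℕ} (h : q ^ (2 * n) ≠ 1) : qNum q n ≠ 0 := by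
  refine div_ne_zero (sub_ne_zero.mpr fun h' => h ?_) (sub_ne_zero.mpr fun h' => h ?_)
  · rw [two_mul, pow_add]
    nth_rewrite 2 [h']
    rw [← mul_pow, mul_inv_cancel₀ hq, one_pow]
  · rw [pow_mul, sq]
    nth_rewrite 2 [h']
    rw [mul_inv_cancel₀ hq, one_pow]

lemma qFact_succ (q : 𝕂) (n : ℕ) : qFact q (n + 1) = qFact q n * qNum q (n + 1) :=
  prod_range_succ _ _

lemma qFact_ne_zero (hq : q ≠ 0) {n : ℕ} (h : ∀ i : ℕ, 1 ≤ i → i ≤ n → q ^ (2 * i) ≠ 1) :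
    qFact q n ≠ 0 :=
  prod_ne_zero_iff.mpr fun j hj => qNum_ne_zero hq (h _ (by omega) (by simp at hj; omega))

lemma sub_inv_ne_zero_of_qNum_ne_zero {n : ℕ} (h : qNum q n ≠ 0) : q - q⁻¹ ≠ 0 :=
  fun hε => h (by rw [qNum, hε, div_zero])

lemma sub_inv_mul_qNum_mul_pow (hq : q ≠ 0) {n : ℕ} (h : qNum q n ≠ 0) :
    (q - q⁻¹) * qNum q n * q ^ n = q ^ (2 * n) - 1 := by
  rw [qNum, mul_div_cancel₀ _ (sub_inv_ne_zero_of_qNum_ne_zero h), sub_mul, ← mul_pow, ← mul_pow,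
    inv_mul_cancel₀ hq, one_pow, ← sq, ← pow_mul]

lemma pow_triangle_div_qFact_succ (p : 𝕂) (hq : q ≠ 0) {n : ℕ} (h : qFact q (n + 1) ≠ 0) :
    p ^ ((n + 1) * (n + 1 - 1) / 2) / qFact q (n + 1) * (q ^ (2 * (n + 1)) - 1) =
      (q - q⁻¹) * q ^ (n + 1) * p ^ n * (p ^ (n * (n - 1) / 2) / qFact q n) := by
  rw [qFact_succ] at h ⊢
  rw [Nat.triangle_succ, ← sub_inv_mul_qNum_mul_pow hq (right_ne_zero_of_mul h), pow_add]
  field_simp [left_ne_zero_of_mul h, right_ne_zero_of_mul h]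

lemma zpow_sub_two_mul_injective (hq : q ≠ 0) {d : ℕ}
    (hq2 : ∀ i : ℕ, 1 ≤ i → i ≤ d → q ^ (2 * i) ≠ 1) :
    Function.Injective fun j : Fin (d + 1) => q ^ ((d : ℤ) - 2 * (j : ℕ)) := by
  have eq_of_le : ∀ i j : Fin (d + 1), i ≤ j →
      q ^ ((d : ℤ) - 2 * (i : ℕ)) = q ^ ((d : ℤ) - 2 * (j : ℕ)) → i = j := by
    intro i j hij h
    have hij' : (i : ℕ) ≤ j := hij
    have h1 : q ^ (2 * ((j : ℕ) - i)) = 1 := by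
      rw [← zpow_natCast, ← div_self (zpow_ne_zero ((d : ℤ) - 2 * (j : ℕ)) hq)]
      nth_rewrite 1 [← h]
      rw [← zpow_sub₀ hq]
      congr 1
      push_cast [hij']
      ring
    by_contra hne
    exact hq2 _ (by omega) (by omega) h1
  intro i j h
  rcases le_total i j with hij | hji
  exacts [eq_of_le i j hij h, (eq_of_le j i hji h.symm).symm]

end QFactorial

section QExponential

variable {𝕂 : Type*} [Field 𝕂] {V : Type*} [AddCommGroup V] [Module 𝕂 V]

lemma one_sub_smul_mul_sum_smul_pow {ψ : Module.End 𝕂 V} {N : ℕ} (hψ : ψ ^ (N + 1) = 0)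
    (s : 𝕂) {f g : ℕ → 𝕂} (h0 : f 0 = g 0)
    (hsucc : ∀ n < N, f (n + 1) - s * f n = g (n + 1)) :
    (1 - s • ψ) * ∑ n ∈ range (N + 1), f n • ψ ^ n =
      ∑ n ∈ range (N + 1), g n • ψ ^ n := by
  have hshift : s • ψ * ∑ n ∈ range (N + 1), f n • ψ ^ n =
      ∑ n ∈ range N, (s * f n) • ψ ^ (n + 1) := by
    simp only [mul_sum, smul_mul_smul_comm, ← pow_succ']
    rw [sum_range_succ, hψ, smul_zero, add_zero]
  rw [sub_mul, one_mul, hshift, sum_range_succ', sum_range_succ' (fun n => g n • ψ ^ n), h0,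
    add_sub_right_comm, ← sum_sub_distrib]
  congr 1
  exact sum_congr rfl fun n hn => by rw [← sub_smul, hsucc n (mem_range.mp hn)]

lemma isUnit_sum_smul_pow {T : Module.End 𝕂 V} (hT : IsNilpotent T) {c : ℕ → 𝕂}
    (hc : c 0 = 1) (N : ℕ) : IsUnit (∑ n ∈ range (N + 1), c n • T ^ n) := by
  have hfactor : ∑ n ∈ range N, c (n + 1) • T ^ (n + 1) =
      T * ∑ n ∈ range N, c (n + 1) • T ^ n := by
    simp only [mul_sum, mul_smul_comm, ← pow_succ']
  rw [sum_range_succ', hfactor, pow_zero, hc, one_smul, add_comm]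
  have hcomm : Commute T (∑ n ∈ range N, c (n + 1) • T ^ n) :=
    Commute.sum_right _ _ _ fun n _ => ((Commute.refl T).pow_right n).smul_right _
  exact (hcomm.isNilpotent_mul_right hT).isUnit_one_add

lemma isUnit_qExp {T : Module.End 𝕂 V} (hT : IsNilpotent T) (q : 𝕂) (N : ℕ) :
    IsUnit (qExp q (N + 1) T) :=
  isUnit_sum_smul_pow hT (by simp [qFact]) N

lemma isUnit_qExpInv {T : Module.End 𝕂 V} (hT : IsNilpotent T) (q : 𝕂) (N : ℕ) :
    IsUnit (qExpInv q (N + 1) T) :=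
  isUnit_sum_smul_pow hT (by simp [qFact]) N

lemma SemiconjBy.qExp {T A B : Module.End 𝕂 V} (h : SemiconjBy T A B) (q : 𝕂) (N : ℕ) :
    SemiconjBy T (qExp q N A) (qExp q N B) := by
  simp only [SemiconjBy, _root_.qExp, mul_sum, sum_mul]
  exact sum_congr rfl fun n _ => ((h.pow_right n).smul_right _).eq

lemma SemiconjBy.qExpInv {T A B : Module.End 𝕂 V} (h : SemiconjBy T A B) (q : 𝕂) (N : ℕ) :
    SemiconjBy T (qExpInv q N A) (qExpInv q N B) := by
  simp only [SemiconjBy, _root_.qExpInv, mul_sum, sum_mul]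
  exact sum_congr rfl fun n _ => ((h.pow_right n).smul_right _).eq

lemma qExp_smul (q : 𝕂) (N : ℕ) (x : 𝕂) (ψ : Module.End 𝕂 V) :
    qExp q N (x • ψ) =
      ∑ n ∈ range N, (q ^ (n * (n - 1) / 2) / qFact q n * x ^ n) • ψ ^ n := by
  simp only [qExp, smul_pow, smul_smul]

lemma qExpInv_neg_smul (q : 𝕂) (N : ℕ) (x : 𝕂) (ψ : Module.End 𝕂 V) :
    qExpInv q N (-(x • ψ)) =
      ∑ n ∈ range N, (q⁻¹ ^ (n * (n - 1) / 2) / qFact q n * (-x) ^ n) • ψ ^ n := by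
  simp only [qExpInv, ← neg_smul, smul_pow, smul_smul]

variable {q : 𝕂} {N : ℕ} {ψ : Module.End 𝕂 V}

lemma one_sub_smul_mul_qExp (hq : q ≠ 0)
    (hq2 : ∀ i : ℕ, 1 ≤ i → i ≤ N → q ^ (2 * i) ≠ 1) (hψ : ψ ^ (N + 1) = 0) (x : 𝕂) :
    (1 - ((q - q⁻¹) * q * x) • ψ) * qExp q (N + 1) ((q ^ 2 * x) • ψ) =
      qExp q (N + 1) (x • ψ) := by
  rw [qExp_smul, qExp_smul]
  refine one_sub_smul_mul_sum_smul_pow hψ _ (by simp) fun n hn => ?_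
  have key := pow_triangle_div_qFact_succ q hq (n := n)
    (qFact_ne_zero hq fun i h1 h2 => hq2 i h1 (by omega))
  linear_combination x ^ (n + 1) * key

lemma one_sub_smul_mul_qExpInv (hq : q ≠ 0)
    (hq2 : ∀ i : ℕ, 1 ≤ i → i ≤ N → q ^ (2 * i) ≠ 1) (hψ : ψ ^ (N + 1) = 0) (x : 𝕂) :
    (1 - ((q - q⁻¹) * q * x) • ψ) * qExpInv q (N + 1) (-(x • ψ)) =
      qExpInv q (N + 1) (-((q ^ 2 * x) • ψ)) := by
  rw [qExpInv_neg_smul, qExpInv_neg_smul]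
  refine one_sub_smul_mul_sum_smul_pow hψ _ (by simp) fun n hn => ?_
  have key := pow_triangle_div_qFact_succ q⁻¹ hq (n := n)
    (qFact_ne_zero hq fun i h1 h2 => hq2 i h1 (by omega))
  have hqn : q ^ n * q⁻¹ ^ n = 1 := by rw [← mul_pow, mul_inv_cancel₀ hq, one_pow]
  linear_combination (-(-x) ^ (n + 1)) * key
    - (q - q⁻¹) * q * (-x) ^ (n + 1) * (q⁻¹ ^ (n * (n - 1) / 2) / qFact q n) * hqn

end QExponential

lemma Commute.ringInverse_right {M₀ : Type*} [MonoidWithZero M₀] {a b : M₀}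
    (h : Commute a b) : Commute a (Ring.inverse b) := by
  by_cases hb : IsUnit b
  · obtain ⟨u, rfl⟩ := hb
    rw [Ring.inverse_unit]
    exact h.units_inv_right
  · rw [Ring.inverse_non_unit _ hb]
    exact Commute.zero_right a

section Intertwining

variable {𝕂 : Type*} [Field 𝕂] {V : Type*} [AddCommGroup V] [Module 𝕂 V]
  {q : 𝕂} {N : ℕ} {ψ T : Module.End 𝕂 V}

lemma isUnit_one_sub_smul (hψ : ψ ^ (N + 1) = 0) (s : 𝕂) : IsUnit (1 - s • ψ) := by
  rw [sub_eq_add_neg]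
  exact (IsNilpotent.neg ⟨N + 1, by rw [smul_pow, hψ, smul_zero]⟩).isUnit_one_add

lemma SemiconjBy.smul_right_of_smul {c : 𝕂} (h : SemiconjBy T ψ (c • ψ)) (x : 𝕂) :
    SemiconjBy T (x • ψ) ((c * x) • ψ) := by
  simpa only [smul_smul, mul_comm x] using h.smul_right x

lemma mul_qExp_eq (hq : q ≠ 0) (hq2 : ∀ i : ℕ, 1 ≤ i → i ≤ N → q ^ (2 * i) ≠ 1)
    (hψ : ψ ^ (N + 1) = 0) (hTψ : SemiconjBy T ψ (q ^ 2 • ψ)) (x : 𝕂) :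
    T * qExp q (N + 1) (x • ψ) =
      qExp q (N + 1) (x • ψ) * (Ring.inverse (1 - ((q - q⁻¹) * q * x) • ψ) * T) := by
  set u : Module.End 𝕂 V := 1 - ((q - q⁻¹) * q * x) • ψ
  have hcomm : Commute (qExp q (N + 1) ((q ^ 2 * x) • ψ)) u :=
    (Commute.one_right _).sub_right
      (Commute.symm (((Commute.refl ψ).smul_right _).qExp q (N + 1)) |>.smul_right _)
  calc T * qExp q (N + 1) (x • ψ) = qExp q (N + 1) ((q ^ 2 * x) • ψ) * T :=
        (hTψ.smul_right_of_smul x).qExp q (N + 1)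
    _ = u * qExp q (N + 1) ((q ^ 2 * x) • ψ) * Ring.inverse u * T := by
        rw [← hcomm.eq, Ring.mul_inverse_cancel_right _ _ (isUnit_one_sub_smul hψ _)]
    _ = _ := by rw [one_sub_smul_mul_qExp hq hq2 hψ, mul_assoc]

lemma inverse_mul_mul_qExpInv_eq (hq : q ≠ 0)
    (hq2 : ∀ i : ℕ, 1 ≤ i → i ≤ N → q ^ (2 * i) ≠ 1) (hψ : ψ ^ (N + 1) = 0)
    (hTψ : SemiconjBy T ψ (q ^ 2 • ψ)) (x : 𝕂) :
    Ring.inverse (1 - ((q - q⁻¹) * q * x) • ψ) * T * qExpInv q (N + 1) (-(x • ψ)) =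
      qExpInv q (N + 1) (-(x • ψ)) * T := by
  have hsemi : SemiconjBy T (-(x • ψ)) (-((q ^ 2 * x) • ψ)) :=
    (hTψ.smul_right_of_smul x).neg_right
  rw [mul_assoc, hsemi.qExpInv q (N + 1), ← one_sub_smul_mul_qExpInv hq hq2 hψ, mul_assoc,
    ← mul_assoc, Ring.inverse_mul_cancel_left _ _ (isUnit_one_sub_smul hψ _)]

end Intertwining

section Eigenspaces

variable {𝕂 : Type*} [Field 𝕂] {V : Type*} [AddCommGroup V] [Module 𝕂 V]

lemma map_eigenspace_le_of_mul_eq {A G C : Module.End 𝕂 V} (h : A * G = G * C) (μ : 𝕂) :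
    (eigenspace C μ).map G ≤ eigenspace A μ := by
  rintro _ ⟨v, hv : v ∈ eigenspace C μ, rfl⟩
  rw [mem_eigenspace_iff] at hv ⊢
  rw [← Module.End.mul_apply, h, Module.End.mul_apply, hv, map_smul]

lemma map_eigenspace_eq_of_mul_eq {A G C : Module.End 𝕂 V} (hG : IsUnit G) (h : A * G = G * C)
    (μ : 𝕂) : (eigenspace C μ).map G = eigenspace A μ := by
  obtain ⟨G, rfl⟩ := hG
  have h' : C * ↑G⁻¹ = ↑G⁻¹ * A := by
    rw [Units.eq_inv_mul_iff_mul_eq, ← mul_assoc, ← h, Units.mul_inv_cancel_right]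
  refine le_antisymm (map_eigenspace_le_of_mul_eq h μ) ?_
  calc eigenspace A μ
        = ((eigenspace A μ).map (↑G⁻¹ : Module.End 𝕂 V)).map (G : Module.End 𝕂 V) := by
        rw [← Submodule.map_comp, ← Module.End.mul_eq_comp, Units.mul_inv, Module.End.one_eq_id,
          Submodule.map_id]
    _ ≤ _ := Submodule.map_mono (map_eigenspace_le_of_mul_eq h' μ)

lemma DirectSum.IsInternal.eq_eigenspace {ι : Type*} [DecidableEq ι] {U : ι → Submodule 𝕂 V}
    (hU : DirectSum.IsInternal U) {T : Module.End 𝕂 V} {μ : ι → 𝕂}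
    (hμ : Function.Injective μ)
    (hT : ∀ i, ∀ v ∈ U i, T v = μ i • v) (i : ι) : U i = eigenspace T (μ i) := by
  have hle : U ≤ fun i => eigenspace T (μ i) := fun i v hv => mem_eigenspace_iff.mpr (hT i v hv)
  exact congr_fun (((T.eigenspaces_iSupIndep.comp hμ).le_iff_eq_of_iSup_eq_top
    hU.submodule_iSup_eq_top).mp hle) i

end Eigenspaces

lemma inv_smul_sub_mul_inverse_mul_eq {𝕂 A : Type*} [Field 𝕂] [Ring A] [Algebra 𝕂 A]
    {a : 𝕂} (ha : a ≠ 0) (haa : a - a⁻¹ ≠ 0) (c : 𝕂) {Y K : A}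
    (hP : IsUnit (1 - (a⁻¹ * c) • Y)) :
    (a - a⁻¹)⁻¹ •
        (a • K - a⁻¹ • ((1 - (a * c) • Y) * Ring.inverse (1 - (a⁻¹ * c) • Y) * K)) =
      Ring.inverse (1 - (a⁻¹ * c) • Y) * K := by
  have hcomm : Commute (1 - (a⁻¹ * c) • Y) (1 - (a * c) • Y) :=
    (Commute.one_left _).sub_left
      (((Commute.one_right Y).sub_right ((Commute.refl Y).smul_right _)).smul_left _)
  rw [eq_comm, Ring.inverse_mul_eq_iff_eq_mul _ _ _ hP, mul_smul_comm, mul_sub, mul_smul_comm,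
    mul_smul_comm, ← mul_assoc, ← mul_assoc, hcomm.eq, mul_assoc _ _ (Ring.inverse _),
    Ring.mul_inverse_cancel _ hP, mul_one]
  simp only [sub_mul, one_mul, smul_mul_assoc, smul_sub, smul_smul, ← mul_assoc,
    mul_inv_cancel₀ ha, inv_mul_cancel₀ ha, one_mul]
  rw [sub_sub_sub_cancel_right, ← sub_smul, ← mul_sub, inv_mul_cancel₀ haa, one_smul]

theorem stmt_10_general
    {𝕂 : Type*} [Field 𝕂] {V : Type*} [AddCommGroup V] [Module 𝕂 V]
    (d : ℕ) (hd : 1 ≤ d) (q a : 𝕂) (hq : q ≠ 0) (ha : a ≠ 0)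
    (hq2 : ∀ i : ℕ, 1 ≤ i → i ≤ d → q ^ (2 * i) ≠ 1)
    (ha2 : ∀ i : ℤ, 1 - (d : ℤ) ≤ i → i ≤ (d : ℤ) - 1 → a ^ 2 ≠ q ^ (2 * i))
    (K : Module.End 𝕂 V)
    (U : ℕ → Submodule 𝕂 V)
    (hUint : DirectSum.IsInternal (fun i : Fin (d + 1) => U i.1))
    (hKU : ∀ i, i ≤ d → ∀ v ∈ U i, K v = (q ^ ((d : ℤ) - 2 * (i : ℤ))) • v)
    (ψ : Module.End 𝕂 V)
    (hψnil : ψ ^ (d + 1) = 0)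
    (hKψ : K * ψ = q ^ 2 • (ψ * K))
    (B : Module.End 𝕂 V)
    (hB : B = (1 - (a * q) • ψ) * Ring.inverse (1 - (a⁻¹ * q) • ψ) * K)
    (M : Module.End 𝕂 V)
    (hM : M = (a - a⁻¹)⁻¹ • (a • K - a⁻¹ • B))
    (Ud : ℕ → Submodule 𝕂 V)
    (hUdint : DirectSum.IsInternal (fun i : Fin (d + 1) => Ud i.1))
    (hBUd : ∀ i, i ≤ d → ∀ v ∈ Ud i, B v = (q ^ ((d : ℤ) - 2 * (i : ℤ))) • v) :
    ∀ i, i ≤ d →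
      U i = Submodule.map (qExp q (d + 1) ((a⁻¹ / (q - q⁻¹)) • ψ)) (Module.End.eigenspace M (q ^ ((d : ℤ) - 2 * (i : ℤ)))) ∧
      Ud i = Submodule.map (qExp q (d + 1) ((a / (q - q⁻¹)) • ψ)) (Module.End.eigenspace M (q ^ ((d : ℤ) - 2 * (i : ℤ)))) ∧
      Module.End.eigenspace M (q ^ ((d : ℤ) - 2 * (i : ℤ))) = Submodule.map (qExpInv q (d + 1) (-((a⁻¹ / (q - q⁻¹)) • ψ))) (U i) ∧
      Module.End.eigenspace M (q ^ ((d : ℤ) - 2 * (i : ℤ))) = Submodule.map (qExpInv q (d + 1) (-((a / (q - q⁻¹)) • ψ))) (Ud i) := by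
  intro i hi
  have hε : q - q⁻¹ ≠ 0 := sub_inv_ne_zero_of_qNum_ne_zero (qNum_ne_zero hq (hq2 1 le_rfl hd))
  have haa : a - a⁻¹ ≠ 0 := by
    refine sub_ne_zero.mpr fun h => ha2 0 (by omega) (by omega) ?_
    rw [mul_zero, zpow_zero, sq]
    nth_rewrite 2 [h]
    exact mul_inv_cancel₀ ha
  have hs : ∀ c : 𝕂, (q - q⁻¹) * q * (c / (q - q⁻¹)) = c * q := fun c => by
    rw [mul_right_comm, mul_div_cancel₀ _ hε]
  have hψcomm : ∀ c : 𝕂, Commute ψ (1 - c • ψ) := fun c =>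
    (Commute.one_right ψ).sub_right ((Commute.refl ψ).smul_right c)
  have hnil : ∀ c : 𝕂, IsNilpotent (c • ψ) := fun c =>
    ⟨d + 1, by rw [smul_pow, hψnil, smul_zero]⟩
  have hKψ' : SemiconjBy K ψ (q ^ 2 • ψ) := by rw [SemiconjBy, hKψ, smul_mul_assoc]
  have hBψ : SemiconjBy B ψ (q ^ 2 • ψ) := hB ▸ SemiconjBy.mul_left
    ((((hψcomm _).mul_right (hψcomm _).ringInverse_right).symm).smul_right _) hKψ'
  have hMK : M = Ring.inverse (1 - (a⁻¹ * q) • ψ) * K := by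
    rw [hM, hB, inv_smul_sub_mul_inverse_mul_eq ha haa q (isUnit_one_sub_smul hψnil _)]
  have hMB : M = Ring.inverse (1 - (a * q) • ψ) * B := by
    rw [hB, mul_assoc, Ring.inverse_mul_cancel_left _ _ (isUnit_one_sub_smul hψnil _), ← hMK]
  have hKE := mul_qExp_eq hq hq2 hψnil hKψ' (a⁻¹ / (q - q⁻¹))
  have hBE := mul_qExp_eq hq hq2 hψnil hBψ (a / (q - q⁻¹))
  have hMF := inverse_mul_mul_qExpInv_eq hq hq2 hψnil hKψ' (a⁻¹ / (q - q⁻¹))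
  have hMF' := inverse_mul_mul_qExpInv_eq hq hq2 hψnil hBψ (a / (q - q⁻¹))
  rw [hs, ← hMK] at hKE hMF
  rw [hs, ← hMB] at hBE hMF'
  have hμ := zpow_sub_two_mul_injective hq hq2
  have hUK := hUint.eq_eigenspace hμ (fun j => hKU j (by omega)) ⟨i, by omega⟩
  have hUdB := hUdint.eq_eigenspace hμ (fun j => hBUd j (by omega)) ⟨i, by omega⟩
  refine ⟨?_, ?_, ?_, ?_⟩
  · rw [hUK, map_eigenspace_eq_of_mul_eq (isUnit_qExp (hnil _) q d) hKE]
  · rw [hUdB, map_eigenspace_eq_of_mul_eq (isUnit_qExp (hnil _) q d) hBE]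
  · rw [hUK, map_eigenspace_eq_of_mul_eq (isUnit_qExpInv (hnil _).neg q d) hMF]
  · rw [hUdB, map_eigenspace_eq_of_mul_eq (isUnit_qExpInv (hnil _).neg q d) hMF']

theorem stmt_10
    {𝕂 : Type*} [Field 𝕂] {V : Type*} [AddCommGroup V] [Module 𝕂 V]
    [FiniteDimensional 𝕂 V]
    (d : ℕ) (hd : 1 ≤ d) (q a : 𝕂) (hq : q ≠ 0) (ha : a ≠ 0)
    (hq2 : ∀ i : ℕ, 1 ≤ i → i ≤ d → q ^ (2 * i) ≠ 1)
    (ha2 : ∀ i : ℤ, 1 - (d : ℤ) ≤ i → i ≤ (d : ℤ) - 1 → a ^ 2 ≠ q ^ (2 * i))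
    (K : Module.End 𝕂 V) (hK : IsUnit K)
    (U : ℕ → Submodule 𝕂 V)
    (hUne : ∀ i, i ≤ d → U i ≠ ⊥)
    (hUint : DirectSum.IsInternal (fun i : Fin (d + 1) => U i.1))
    (hKU : ∀ i, i ≤ d → ∀ v ∈ U i, K v = (q ^ ((d : ℤ) - 2 * (i : ℤ))) • v)
    (ψ : Module.End 𝕂 V)
    (hψ0 : ∀ v ∈ U 0, ψ v = 0)
    (hψU : ∀ i, 1 ≤ i → i ≤ d → ∀ v ∈ U i, ψ v ∈ U (i - 1))
    (hψnil : ψ ^ (d + 1) = 0)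
    (hKψ : K * ψ = q ^ 2 • (ψ * K))
    (hinv : ∀ x : 𝕂, IsUnit (1 - x • ψ))
    (B : Module.End 𝕂 V)
    (hB : B = (1 - (a * q) • ψ) * Ring.inverse (1 - (a⁻¹ * q) • ψ) * K)
    (M : Module.End 𝕂 V)
    (hM : M = (a - a⁻¹)⁻¹ • (a • K - a⁻¹ • B))
    (hMunit : IsUnit M)
    (Ud : ℕ → Submodule 𝕂 V)
    (hUdne : ∀ i, i ≤ d → Ud i ≠ ⊥)
    (hUdint : DirectSum.IsInternal (fun i : Fin (d + 1) => Ud i.1))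
    (hBUd : ∀ i, i ≤ d → ∀ v ∈ Ud i, B v = (q ^ ((d : ℤ) - 2 * (i : ℤ))) • v)
    (hψ0d : ∀ v ∈ Ud 0, ψ v = 0)
    (hψUd : ∀ i, 1 ≤ i → i ≤ d → ∀ v ∈ Ud i, ψ v ∈ Ud (i - 1)):
    ∀ i, i ≤ d →
      U i = Submodule.map (qExp q (d + 1) ((a⁻¹ / (q - q⁻¹)) • ψ)) (Module.End.eigenspace M (q ^ ((d : ℤ) - 2 * (i : ℤ)))) ∧
      Ud i = Submodule.map (qExp q (d + 1) ((a / (q - q⁻¹)) • ψ)) (Module.End.eigenspace M (q ^ ((d : ℤ) - 2 * (i : ℤ)))) ∧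
      Module.End.eigenspace M (q ^ ((d : ℤ) - 2 * (i : ℤ))) = Submodule.map (qExpInv q (d + 1) (-((a⁻¹ / (q - q⁻¹)) • ψ))) (U i) ∧
      Module.End.eigenspace M (q ^ ((d : ℤ) - 2 * (i : ℤ))) = Submodule.map (qExpInv q (d + 1) (-((a / (q - q⁻¹)) • ψ))) (Ud i) :=
  stmt_10_general d hd q a hq ha hq2 ha2 K U hUint hKU ψ hψnil hKψ B hB M hM Ud hUdint hBUd
end

section
/- For 0 ≤ i ≤ d, ψW_i ⊆ W_{i−1}. -/
/-!
With `u = 1 - a⁻¹qψ` one has `B = (1 - aqψ) u⁻¹ K`, hence `𝓜 = u⁻¹ K`; as `u` commutes with `ψ`,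
`𝓜ψ = q²ψ𝓜`, so `ψ` maps the `λ`-eigenspace of `𝓜` into the `q²λ`-eigenspace. This is the claim
for `i ≥ 1`. For `i = 0` let `𝓜w = q^d w`. If `ψ^(m+1) w = 0` with `1 ≤ m ≤ d`, then `u` fixes
`ψ^m w`, so `ψ^m w` is a `K`-eigenvector for `q^(d+2m)`; but it lies in `U₀ + ⋯ + U_(d-m)`, where
the eigenvalues `q^(d-2k)` of `K` all differ from `q^(d+2m)`. Hence `ψ^m w = 0`, and descending
from `ψ^(d+1) = 0` gives `ψw = 0`.
-/

namespace Module.End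

variable {R M : Type*} [CommRing R] [AddCommGroup M] [Module R M]

theorem mul_pow_eq_smul_pow_mul {f g : End R M} {c : R} (h : f * g = c • (g * f)) (m : ℕ) :
    f * g ^ m = c ^ m • (g ^ m * f) := by
  induction m with
  | zero => simp
  | succ m ih =>
    rw [pow_succ, ← mul_assoc, ih, smul_mul_assoc, mul_assoc, h, mul_smul_comm, smul_smul,
      ← mul_assoc, ← pow_succ, pow_succ]

theorem map_eigenspace_le_of_mul_eq_smul_mul {f g : End R M} {c : R} (h : f * g = c • (g * f))
    (μ : R) : (f.eigenspace μ).map g ≤ f.eigenspace (c * μ) := by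
  rintro - ⟨v, hv, rfl⟩
  rw [SetLike.mem_coe, mem_eigenspace_iff] at hv
  rw [mem_eigenspace_iff, ← mul_apply, h, LinearMap.smul_apply, mul_apply, hv, map_smul, smul_smul]

theorem eq_zero_of_mem_eigenspace_of_mem_iSup [IsDomain R] [IsTorsionFree R M] {ι : Type*}
    {f : End R M} {U : ι → Submodule R M} {p : ι → Prop} {ν : ι → R} {μ : R}
    (hU : ∀ k, p k → ∀ v ∈ U k, f v = ν k • v) (hν : ∀ k, p k → ν k ≠ μ) {x : M}
    (hxU : x ∈ ⨆ (k) (_ : p k), U k) (hx : x ∈ f.eigenspace μ) : x = 0 := by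
  have hle : ⨆ (k) (_ : p k), U k ≤ ⨆ (ν') (_ : ν' ≠ μ), f.eigenspace ν' :=
    iSup₂_le fun k hk v hv => Submodule.mem_iSup_of_mem (ν k) <| Submodule.mem_iSup_of_mem (hν k hk)
      (mem_eigenspace_iff.mpr (hU k hk v hv))
  exact Submodule.disjoint_def.mp (f.eigenspaces_iSupIndep μ) x hx (hle hxU)

theorem pow_apply_mem_iSup_add_le {g : End R M} {U : ℕ → Submodule R M} {d : ℕ}
    (h0 : ∀ v ∈ U 0, g v = 0) (hU : ∀ i, 1 ≤ i → i ≤ d → ∀ v ∈ U i, g v ∈ U (i - 1))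
    {v : M} (hv : v ∈ ⨆ (k) (_ : k ≤ d), U k) (m : ℕ) :
    (g ^ m) v ∈ ⨆ (k) (_ : k + m ≤ d), U k := by
  induction m with
  | zero => simpa using hv
  | succ m ih =>
    rw [pow_succ', mul_apply]
    refine (Submodule.map_le_iff_le_comap.mpr (iSup₂_le fun k hk => ?_))
      (Submodule.mem_map_of_mem ih)
    rcases k with _ | k
    · exact fun x hx => by simp [h0 x hx]
    · exact fun x hx => Submodule.mem_iSup_of_mem k <| Submodule.mem_iSup_of_mem (by omega)
        (by simpa using hU (k + 1) (by omega) (by omega) x hx)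

end Module.End

theorem sub_inv_ne_zero_of_sq_ne_one {𝕂 : Type*} [Field 𝕂] {a : 𝕂} (ha : a ≠ 0) (ha2 : a ^ 2 ≠ 1) :
    a - a⁻¹ ≠ 0 := by
  intro h
  apply ha2
  rw [sq, ← mul_inv_cancel₀ ha, ← sub_eq_zero.mp h]

section

variable {𝕂 A : Type*} [Field 𝕂] [Ring A] [Algebra 𝕂 A]

theorem smul_sub_smul_mul_inverse_mul {a q : 𝕂} (ha : a - a⁻¹ ≠ 0) {ψ K : A}
    (hu : IsUnit (1 - (a⁻¹ * q) • ψ)) :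
    (a - a⁻¹)⁻¹ • (a • K - a⁻¹ • ((1 - (a * q) • ψ) * Ring.inverse (1 - (a⁻¹ * q) • ψ) * K)) =
      Ring.inverse (1 - (a⁻¹ * q) • ψ) * K := by
  set u := 1 - (a⁻¹ * q) • ψ
  have hcoef : a • u - a⁻¹ • (1 - (a * q) • ψ) = (a - a⁻¹) • (1 : A) := by
    simp only [u]; module
  calc (a - a⁻¹)⁻¹ • (a • K - a⁻¹ • ((1 - (a * q) • ψ) * Ring.inverse u * K))
      = (a - a⁻¹)⁻¹ • ((a • u - a⁻¹ • (1 - (a * q) • ψ)) * (Ring.inverse u * K)) := by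
        rw [sub_mul (a • u), smul_mul_assoc, smul_mul_assoc, ← mul_assoc u,
          Ring.mul_inverse_cancel u hu, one_mul, ← mul_assoc]
    _ = Ring.inverse u * K := by
        rw [hcoef, smul_mul_assoc, one_mul, smul_smul, inv_mul_cancel₀ ha, one_smul]

theorem IsUnit.mul_eq_smul_mul_of_commute {u M ψ : A} {c : 𝕂} (hu : IsUnit u)
    (hψ : Commute u ψ) (h : u * M * ψ = c • (ψ * (u * M))) : M * ψ = c • (ψ * M) := by
  refine hu.mul_left_cancel ?_
  rw [← mul_assoc, h, mul_smul_comm, ← mul_assoc, ← hψ.eq, mul_assoc]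

end

theorem zpow_sub_ne_pow_mul_zpow {𝕂 : Type*} [Field 𝕂] {q : 𝕂} (hq : q ≠ 0) {d : ℕ}
    (hq2 : ∀ i : ℕ, 1 ≤ i → i ≤ d → q ^ (2 * i) ≠ 1) {k m : ℕ} (hm : 1 ≤ m) (hkm : k + m ≤ d) :
    q ^ ((d : ℤ) - 2 * k) ≠ (q ^ 2) ^ m * q ^ (d : ℤ) := by
  intro h
  apply hq2 (k + m) (by omega) hkm
  refine mul_right_cancel₀ (zpow_ne_zero (d : ℤ) hq) ?_
  calc q ^ (2 * (k + m)) * q ^ (d : ℤ) = (q ^ 2) ^ m * q ^ (d : ℤ) * q ^ (2 * k) := by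
        ring
    _ = 1 * q ^ (d : ℤ) := by
        rw [← h, ← zpow_natCast, ← zpow_add₀ hq]; push_cast; ring_nf

theorem apply_eq_zero_of_mem_eigenspace_zpow {𝕂 V : Type*} [Field 𝕂] [AddCommGroup V]
    [Module 𝕂 V] {d : ℕ} {q x : 𝕂} (hq : q ≠ 0) (hq2 : ∀ i : ℕ, 1 ≤ i → i ≤ d → q ^ (2 * i) ≠ 1)
    {K ψ M : Module.End 𝕂 V} {U : ℕ → Submodule 𝕂 V} (htop : ⨆ (k) (_ : k ≤ d), U k = ⊤)
    (hKU : ∀ i, i ≤ d → ∀ v ∈ U i, K v = (q ^ ((d : ℤ) - 2 * (i : ℤ))) • v)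
    (hψ0 : ∀ v ∈ U 0, ψ v = 0) (hψU : ∀ i, 1 ≤ i → i ≤ d → ∀ v ∈ U i, ψ v ∈ U (i - 1))
    (hψnil : ψ ^ (d + 1) = 0) (hKM : K = (1 - x • ψ) * M) (hMψ : M * ψ = q ^ 2 • (ψ * M))
    {w : V} (hw : w ∈ M.eigenspace (q ^ (d : ℤ))) : ψ w = 0 := by
  have hdesc : ∀ m, 1 ≤ m → m ≤ d → (ψ ^ (m + 1)) w = 0 → (ψ ^ m) w = 0 := by
    intro m hm hmd hnext
    have hψy : ψ ((ψ ^ m) w) = 0 := by rwa [← Module.End.mul_apply, ← pow_succ']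
    have hMy := Module.End.map_eigenspace_le_of_mul_eq_smul_mul
      (Module.End.mul_pow_eq_smul_pow_mul hMψ m) _ (Submodule.mem_map_of_mem hw)
    have hKy : (ψ ^ m) w ∈ K.eigenspace ((q ^ 2) ^ m * q ^ (d : ℤ)) := by
      rw [Module.End.mem_eigenspace_iff] at hMy ⊢
      rw [hKM, Module.End.mul_apply, hMy, map_smul, LinearMap.sub_apply, LinearMap.smul_apply,
        hψy, smul_zero, Module.End.one_apply, sub_zero]
    exact Module.End.eq_zero_of_mem_eigenspace_of_mem_iSup (p := fun k => k + m ≤ d)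
      (fun k hk => hKU k (by omega)) (fun k hk => zpow_sub_ne_pow_mul_zpow hq hq2 hm hk)
      (Module.End.pow_apply_mem_iSup_add_le hψ0 hψU (htop ▸ Submodule.mem_top) m) hKy
  simpa using Nat.decreasingInduction' (P := fun m => (ψ ^ m) w = 0)
    (fun m hm h1 => hdesc m h1 (by omega)) (show 1 ≤ d + 1 by omega) (by simp [hψnil])

theorem stmt_13_general
    {𝕂 : Type*} [Field 𝕂] {V : Type*} [AddCommGroup V] [Module 𝕂 V]
    (d : ℕ) (hd : 1 ≤ d) (q a : 𝕂) (hq : q ≠ 0) (ha : a ≠ 0)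
    (hq2 : ∀ i : ℕ, 1 ≤ i → i ≤ d → q ^ (2 * i) ≠ 1)
    (ha2 : ∀ i : ℤ, 1 - (d : ℤ) ≤ i → i ≤ (d : ℤ) - 1 → a ^ 2 ≠ q ^ (2 * i))
    (K : Module.End 𝕂 V)
    (U : ℕ → Submodule 𝕂 V)
    (hUint : DirectSum.IsInternal (fun i : Fin (d + 1) => U i.1))
    (hKU : ∀ i, i ≤ d → ∀ v ∈ U i, K v = (q ^ ((d : ℤ) - 2 * (i : ℤ))) • v)
    (ψ : Module.End 𝕂 V)
    (hψ0 : ∀ v ∈ U 0, ψ v = 0)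
    (hψU : ∀ i, 1 ≤ i → i ≤ d → ∀ v ∈ U i, ψ v ∈ U (i - 1))
    (hψnil : ψ ^ (d + 1) = 0)
    (hKψ : K * ψ = q ^ 2 • (ψ * K))
    (hinv : ∀ x : 𝕂, IsUnit (1 - x • ψ))
    (B : Module.End 𝕂 V)
    (hB : B = (1 - (a * q) • ψ) * Ring.inverse (1 - (a⁻¹ * q) • ψ) * K)
    (M : Module.End 𝕂 V)
    (hM : M = (a - a⁻¹)⁻¹ • (a • K - a⁻¹ • B)):
    ∀ i, i ≤ d →
      Submodule.map ψ (Module.End.eigenspace M (q ^ ((d : ℤ) - 2 * (i : ℤ))))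
        ≤ if i = 0 then ⊥ else Module.End.eigenspace M (q ^ ((d : ℤ) - 2 * ((i - 1) : ℤ))) := by
  intro i hi
  have haa : a - a⁻¹ ≠ 0 :=
    sub_inv_ne_zero_of_sq_ne_one ha (by simpa using ha2 0 (by omega) (by omega))
  have hu := hinv (a⁻¹ * q)
  have hMK : M = Ring.inverse (1 - (a⁻¹ * q) • ψ) * K := by
    rw [hM, hB, smul_sub_smul_mul_inverse_mul haa hu]
  have hKM : K = (1 - (a⁻¹ * q) • ψ) * M := by
    rw [hMK, ← mul_assoc, Ring.mul_inverse_cancel _ hu, one_mul]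
  have hMψ : M * ψ = q ^ 2 • (ψ * M) := hu.mul_eq_smul_mul_of_commute
    ((Commute.one_left ψ).sub_left ((Commute.refl ψ).smul_left _)) (hKM ▸ hKψ)
  rcases i with _ | i
  · have htop : ⨆ (k) (_ : k ≤ d), U k = ⊤ := eq_top_iff.mpr <|
      hUint.submodule_iSup_eq_top.ge.trans (iSup_le fun k => le_iSup₂_of_le k.1 (by omega) le_rfl)
    rintro - ⟨w, hw, rfl⟩
    exact apply_eq_zero_of_mem_eigenspace_zpow hq hq2 htop hKU hψ0 hψU hψnil hKM hMψ
      (by simpa using hw)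
  · rw [if_neg (Nat.succ_ne_zero i)]
    convert Module.End.map_eigenspace_le_of_mul_eq_smul_mul hMψ _ using 2
    rw [← zpow_natCast, ← zpow_add₀ hq]
    push_cast
    ring_nf

theorem stmt_13
    {𝕂 : Type*} [Field 𝕂] {V : Type*} [AddCommGroup V] [Module 𝕂 V]
    [FiniteDimensional 𝕂 V]
    (d : ℕ) (hd : 1 ≤ d) (q a : 𝕂) (hq : q ≠ 0) (ha : a ≠ 0)
    (hq2 : ∀ i : ℕ, 1 ≤ i → i ≤ d → q ^ (2 * i) ≠ 1)
    (ha2 : ∀ i : ℤ, 1 - (d : ℤ) ≤ i → i ≤ (d : ℤ) - 1 → a ^ 2 ≠ q ^ (2 * i))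
    (K : Module.End 𝕂 V) (hK : IsUnit K)
    (U : ℕ → Submodule 𝕂 V)
    (hUne : ∀ i, i ≤ d → U i ≠ ⊥)
    (hUint : DirectSum.IsInternal (fun i : Fin (d + 1) => U i.1))
    (hKU : ∀ i, i ≤ d → ∀ v ∈ U i, K v = (q ^ ((d : ℤ) - 2 * (i : ℤ))) • v)
    (ψ : Module.End 𝕂 V)
    (hψ0 : ∀ v ∈ U 0, ψ v = 0)
    (hψU : ∀ i, 1 ≤ i → i ≤ d → ∀ v ∈ U i, ψ v ∈ U (i - 1))
    (hψnil : ψ ^ (d + 1) = 0)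
    (hKψ : K * ψ = q ^ 2 • (ψ * K))
    (hinv : ∀ x : 𝕂, IsUnit (1 - x • ψ))
    (B : Module.End 𝕂 V)
    (hB : B = (1 - (a * q) • ψ) * Ring.inverse (1 - (a⁻¹ * q) • ψ) * K)
    (M : Module.End 𝕂 V)
    (hM : M = (a - a⁻¹)⁻¹ • (a • K - a⁻¹ • B))
    (hMunit : IsUnit M):
    ∀ i, i ≤ d →
      Submodule.map ψ (Module.End.eigenspace M (q ^ ((d : ℤ) - 2 * (i : ℤ))))
        ≤ if i = 0 then ⊥ else Module.End.eigenspace M (q ^ ((d : ℤ) - 2 * ((i - 1) : ℤ))) :=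
  stmt_13_general d hd q a hq ha hq2 ha2 K U hUint hKU ψ hψ0 hψU hψnil hKψ hinv B hB M hM
end
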